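/- arXiv:1409.4386 — 4 statements merged into one kernel-verified Lean document; each statement's English description precedes it below -/
import Mathlib

section
/- For an antichain poset P on [d], the centrally symmetric polytope Q^(sym)_{A_P} equals the Minkowski sum C_d + L, where C_d is the unit d-cube [0,1]^d in R^d and L is the closed line segment from the origin to the vector v = (-1,...,-1). Equivalently, Q^(sym)_{A_P} = { r_1 e_1 + ... + r_d e_d + r_{d+1} v : 0 ≤ r_i ≤ 1 for all i }. -/
/-!
The reflected cube is a translate of the cube: `-[0,1]^d = [0,1]^d + v` with `v = (-1,…,-1)`.
The convex hull of a convex set `C` and its translate `C + v` is the Minkowski sum `C + [0, v]`,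
since `c + t • v = (1 - t) • c + t • (c + v)`. Writing a point of `[0,1]^d + [0, v]` as
`c - t • 1` and recording `t` as an extra coordinate gives the zonotope description.
-/

open Pointwise Set

section Segment

variable {𝕜 E : Type*} [Field 𝕜] [LinearOrder 𝕜] [IsStrictOrderedRing 𝕜] [AddCommGroup E]
  [Module 𝕜 E]

theorem Convex.convexHull_union_vadd_eq_add_segment {C : Set E} (hC : Convex 𝕜 C) (v : E) :
    convexHull 𝕜 (C ∪ (v +ᵥ C)) = C + segment 𝕜 0 v := by
  apply Subset.antisymm
  · refine convexHull_min (union_subset ?_ ?_) (hC.add (convex_segment 0 v))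
    · exact fun c hc => ⟨c, hc, 0, left_mem_segment 𝕜 0 v, add_zero c⟩
    · rintro _ ⟨c, hc, rfl⟩
      exact ⟨c, hc, v, right_mem_segment 𝕜 0 v, add_comm c v⟩
  · rintro _ ⟨c, hc, _, ⟨a, b, ha, hb, hab, rfl⟩, rfl⟩
    have hsub := subset_convexHull 𝕜 (C ∪ (v +ᵥ C))
    convert convex_convexHull 𝕜 _ (hsub (Or.inl hc)) (hsub (Or.inr (vadd_mem_vadd_set hc)))
      ha hb hab using 1
    simp only [vadd_eq_add]
    linear_combination (norm := module) -(hab • c)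

theorem mem_add_segment_zero_iff {s : Set E} {v x : E} :
    x ∈ s + segment 𝕜 0 v ↔ ∃ t ∈ Icc (0 : 𝕜) 1, x - t • v ∈ s := by
  simp only [segment_eq_image', mem_add, mem_image, sub_zero, zero_add]
  constructor
  · rintro ⟨c, hc, _, ⟨t, ht, rfl⟩, rfl⟩
    exact ⟨t, ht, by rwa [add_sub_cancel_right]⟩
  · rintro ⟨t, ht, hx⟩
    exact ⟨_, hx, _, ⟨t, ht, rfl⟩, sub_add_cancel x _⟩

end Segment

theorem setOf_forall_zero_le_le_one_eq_Icc (ι : Type*) :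
    {x : ι → ℝ | ∀ i, 0 ≤ x i ∧ x i ≤ 1} = Icc 0 1 := by
  ext x
  simp only [mem_ofPred_eq, mem_Icc, Pi.le_def, Pi.zero_apply, Pi.one_apply, forall_and]

theorem neg_Icc_zero_one_eq_vadd (ι : Type*) :
    -Icc (0 : ι → ℝ) 1 = (-1 : ι → ℝ) +ᵥ Icc (0 : ι → ℝ) 1 := by
  simp_rw [neg_Icc, ← image_vadd, vadd_eq_add, image_const_add_Icc, add_zero, neg_zero,
    neg_add_cancel]

theorem exists_mem_Icc_sub_last_iff {d : ℕ} {x : Fin d → ℝ} :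
    (∃ r : Fin (d + 1) → ℝ, (∀ i, 0 ≤ r i ∧ r i ≤ 1) ∧
        ∀ j : Fin d, x j = r j.castSucc - r (Fin.last d)) ↔
      ∃ t ∈ Icc (0 : ℝ) 1, x - t • (-1) ∈ Icc 0 1 := by
  simp only [Fin.forall_fin_succ', mem_Icc, Pi.le_def, Pi.sub_apply, Pi.smul_apply,
    Pi.neg_apply, Pi.zero_apply, Pi.one_apply, smul_eq_mul, mul_neg, mul_one, sub_neg_eq_add]
  constructor
  · rintro ⟨r, ⟨hr, hlast⟩, hx⟩
    refine ⟨r (Fin.last d), hlast, ?_, ?_⟩ <;> intro j <;> linarith [hx j, hr j]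
  · rintro ⟨t, ht, hlo, hhi⟩
    refine ⟨Fin.snoc (x + fun _ => t) t, ⟨fun j => ?_, ?_⟩, fun j => ?_⟩ <;>
      simp only [Fin.snoc_castSucc, Fin.snoc_last, Pi.add_apply]
    exacts [⟨hlo j, hhi j⟩, ht, (add_sub_cancel_right _ _).symm]

/-- For the antichain poset on [d], the centrally symmetric polytope
`Q^(sym)_{A_P} = conv([0,1]^d ∪ -[0,1]^d)` equals the Minkowski sum of the unit cube and
the segment from the origin to `(-1,...,-1)`; equivalently it is the zonotope
`{ r_1 e_1 + ⋯ + r_d e_d + r_{d+1} v : 0 ≤ r_i ≤ 1 }`. -/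
theorem stmt0 (d : ℕ) :
    (convexHull ℝ ({x : Fin d → ℝ | ∀ i, 0 ≤ x i ∧ x i ≤ 1} ∪
        (-{x : Fin d → ℝ | ∀ i, 0 ≤ x i ∧ x i ≤ 1})) =
      {x : Fin d → ℝ | ∀ i, 0 ≤ x i ∧ x i ≤ 1} +
        segment ℝ (0 : Fin d → ℝ) (fun _ => (-1 : ℝ))) ∧
    (convexHull ℝ ({x : Fin d → ℝ | ∀ i, 0 ≤ x i ∧ x i ≤ 1} ∪
        (-{x : Fin d → ℝ | ∀ i, 0 ≤ x i ∧ x i ≤ 1})) =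
      {x : Fin d → ℝ | ∃ r : Fin (d + 1) → ℝ, (∀ i, 0 ≤ r i ∧ r i ≤ 1) ∧
        ∀ j : Fin d, x j = r j.castSucc - r (Fin.last d)}) := by
  have hhull : convexHull ℝ (Icc (0 : Fin d → ℝ) 1 ∪ -Icc 0 1) = Icc 0 1 + segment ℝ 0 (-1) := by
    rw [neg_Icc_zero_one_eq_vadd, (convex_Icc 0 1).convexHull_union_vadd_eq_add_segment]
  rw [setOf_forall_zero_le_le_one_eq_Icc]
  refine ⟨hhull, hhull.trans ?_⟩
  ext x
  rw [mem_add_segment_zero_iff, mem_ofPred_eq, exists_mem_Icc_sub_last_iff]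
end

section
/- Let P be an antichain poset on [d] and let Q = Q^(sym)_{A_P} be the convex hull of [0,1]^d ∪ (-[0,1]^d) in R^d. Then the Ehrhart polynomial of Q is i(Q, t) = (t+1)^{d+1} - t^{d+1}, i.e., the number of lattice points in the dilate tQ equals (t+1)^{d+1} - t^{d+1} for every positive integer t. -/
/-!
The dilate `t • Q` is the polytope `{y | |y i| ≤ t, y i - y j ≤ t}`. Prepending a coordinate `0`,
its lattice points become the vectors in `ℤ^{d+1}` with first coordinate `0` whose coordinates
spread by at most `t`; translating by the minimum coordinate maps these bijectively onto the
vectors of `[0, t]^{d+1}` having a zero coordinate, and there are `(t+1)^{d+1} - t^{d+1}` of those.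
-/

open Pointwise

def unitCube (ι : Type*) : Set (ι → ℝ) := {x | ∀ i, 0 ≤ x i ∧ x i ≤ 1}

def boundedDiffBox (ι : Type*) (c : ℝ) : Set (ι → ℝ) :=
  {y | (∀ i j, y i - y j ≤ c) ∧ ∀ i, -c ≤ y i ∧ y i ≤ c}

section Geometry

variable {ι : Type*}

theorem add_mem_boundedDiffBox {a b : ℝ} {u v : ι → ℝ} (hu : u ∈ boundedDiffBox ι a)
    (hv : v ∈ boundedDiffBox ι b) : u + v ∈ boundedDiffBox ι (a + b) := by
  refine ⟨fun i j => ?_, fun i => ⟨?_, ?_⟩⟩ <;> simp only [Pi.add_apply]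
  · linarith [hu.1 i j, hv.1 i j]
  · linarith [(hu.2 i).1, (hv.2 i).1]
  · linarith [(hu.2 i).2, (hv.2 i).2]

theorem smul_mem_boundedDiffBox {a c : ℝ} {u : ι → ℝ} (hc : 0 ≤ c)
    (hu : u ∈ boundedDiffBox ι a) : c • u ∈ boundedDiffBox ι (c * a) := by
  refine ⟨fun i j => ?_, fun i => ⟨?_, ?_⟩⟩ <;> simp only [Pi.smul_apply, smul_eq_mul]
  · rw [← mul_sub]; exact mul_le_mul_of_nonneg_left (hu.1 i j) hc
  · rw [← mul_neg]; exact mul_le_mul_of_nonneg_left (hu.2 i).1 hc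
  · exact mul_le_mul_of_nonneg_left (hu.2 i).2 hc

theorem convex_boundedDiffBox (c : ℝ) : Convex ℝ (boundedDiffBox ι c) := by
  intro u hu v hv a b ha hb hab
  have := add_mem_boundedDiffBox (smul_mem_boundedDiffBox ha hu) (smul_mem_boundedDiffBox hb hv)
  rwa [← add_mul, hab, one_mul] at this

theorem unitCube_union_neg_subset_boundedDiffBox :
    unitCube ι ∪ -unitCube ι ⊆ boundedDiffBox ι 1 := by
  rintro y (hy | hy)
  · exact ⟨fun i j => by linarith [(hy i).2, (hy j).1],
      fun i => ⟨by linarith [(hy i).1], (hy i).2⟩⟩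
  · have hy : ∀ i, 0 ≤ -y i ∧ -y i ≤ 1 := hy
    exact ⟨fun i j => by linarith [(hy i).1, (hy j).2],
      fun i => ⟨by linarith [(hy i).2], by linarith [(hy i).1]⟩⟩

theorem mem_smul_unitCube {L : ℝ} {p : ι → ℝ} (hp : ∀ i, 0 ≤ p i ∧ p i ≤ L) :
    p ∈ L • unitCube ι := by
  refine ⟨fun i => p i / L, fun i => ⟨div_nonneg (hp i).1 ((hp i).1.trans (hp i).2),
    div_le_one_of_le₀ (hp i).2 ((hp i).1.trans (hp i).2)⟩, funext fun i => ?_⟩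
  rcases eq_or_ne L 0 with rfl | hL
  · simp [le_antisymm (hp i).2 (hp i).1]
  · exact mul_div_cancel₀ _ hL

theorem smul_convexHull_unitCube_union_neg [Finite ι] {c : ℝ} (hc : 0 ≤ c) :
    c • convexHull ℝ (unitCube ι ∪ -unitCube ι) = boundedDiffBox ι c := by
  set K := convexHull ℝ (unitCube ι ∪ -unitCube ι)
  apply subset_antisymm
  · rintro _ ⟨k, hk, rfl⟩
    simpa using smul_mem_boundedDiffBox hc
      (convexHull_min unitCube_union_neg_subset_boundedDiffBox (convex_boundedDiffBox 1) hk)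
  · -- With `L ∈ [0, c]` and `L - c ≤ y ≤ L`, `y = y⁺ - y⁻` where `y⁺ ∈ L • [0,1]^ι` and
    -- `y⁻ ∈ (c - L) • [0,1]^ι`; convexity of `K` gives `L • K + (c - L) • K = c • K`.
    rintro y ⟨hdiff, hbound⟩
    set L := ⨆ i, y⁺ i
    have hyL : ∀ i, y⁺ i ≤ L := le_ciSup (Finite.bddAbove_range _)
    have hL0 : 0 ≤ L := Real.iSup_nonneg fun i => le_max_right _ _
    have hLc : L ≤ c := Real.iSup_le (fun i => max_le (hbound i).2 hc) hc
    have hLy : ∀ j, L ≤ c + y j := fun j => Real.iSup_le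
      (fun i => max_le (show y i ≤ c + y j by linarith [hdiff i j])
        (show (0 : ℝ) ≤ c + y j by linarith [hbound j])) (by linarith [hbound j])
    have hpos : y⁺ ∈ L • K :=
      Set.smul_set_mono (subset_convexHull ℝ _ |>.trans' Set.subset_union_left)
        (mem_smul_unitCube fun i => ⟨le_max_right _ _, hyL i⟩)
    have hneg : -y⁻ ∈ (c - L) • K := by
      refine Set.smul_set_mono (subset_convexHull ℝ _ |>.trans' Set.subset_union_right) ?_
      rw [Set.smul_set_neg, Set.neg_mem_neg]
      exact mem_smul_unitCube fun i => ⟨le_max_right _ _,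
        max_le (show -y i ≤ c - L by linarith [hLy i]) (show (0 : ℝ) ≤ c - L by linarith)⟩
    rw [← add_sub_cancel L c, (convex_convexHull ℝ _).add_smul hL0 (by linarith),
      ← posPart_sub_negPart y, sub_eq_add_neg]
    exact Set.add_mem_add hpos hneg

theorem intCast_mem_boundedDiffBox {x : ι → ℤ} {t : ℤ} :
    (fun i => (x i : ℝ)) ∈ boundedDiffBox ι t ↔
      (∀ i j, x i - x j ≤ t) ∧ ∀ i, -t ≤ x i ∧ x i ≤ t := by
  simp only [boundedDiffBox, Set.mem_ofPred_eq]
  norm_cast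

end Geometry

section Counting

variable {κ : Type*} [Fintype κ]

theorem ncard_Icc_and_exists_eq_zero (t : ℕ) :
    {w : κ → ℤ | (∀ i, 0 ≤ w i ∧ w i ≤ t) ∧ ∃ j, w j = 0}.ncard =
      (t + 1) ^ Fintype.card κ - t ^ Fintype.card κ := by
  classical
  have hset : {w : κ → ℤ | (∀ i, 0 ≤ w i ∧ w i ≤ t) ∧ ∃ j, w j = 0} =
      ↑(Fintype.piFinset (fun _ : κ => Finset.Icc (0 : ℤ) t) \
        Fintype.piFinset (fun _ => Finset.Icc (1 : ℤ) t)) := by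
    ext w
    simp only [Set.mem_ofPred_eq, Finset.coe_sdiff, Set.mem_sdiff, Finset.mem_coe,
      Fintype.mem_piFinset, Finset.mem_Icc, not_forall]
    refine and_congr_right fun hw => exists_congr fun j => ?_
    have := hw j
    omega
  have hsub : Fintype.piFinset (fun _ : κ => Finset.Icc (1 : ℤ) t) ⊆
      Fintype.piFinset (fun _ => Finset.Icc (0 : ℤ) t) :=
    Fintype.piFinset_subset _ _ fun _ => Finset.Icc_subset_Icc zero_le_one le_rfl
  rw [hset, Set.ncard_coe_finset, Finset.card_sdiff_of_subset hsub, Fintype.card_piFinset,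
    Fintype.card_piFinset]
  simp [Int.card_Icc]

-- The bijection is translation by the minimum coordinate.
theorem ncard_spread_le_eq_ncard_Icc_and_exists_eq_zero (k : κ) (t : ℤ) :
    {z : κ → ℤ | z k = 0 ∧ ∀ i j, z i - z j ≤ t}.ncard =
      {w : κ → ℤ | (∀ i, 0 ≤ w i ∧ w i ≤ t) ∧ ∃ j, w j = 0}.ncard := by
  have hne : (Finset.univ : Finset κ).Nonempty := ⟨k, Finset.mem_univ k⟩
  refine Set.BijOn.ncard_eq (f := fun z i => z i - Finset.univ.inf' hne z)
    (Set.InvOn.bijOn (f' := fun w i => w i - w k)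
      ⟨fun z ⟨hz, _⟩ => ?_, fun w ⟨hw, j, hj⟩ => ?_⟩
      (fun z ⟨_, hz⟩ => ?_) (fun w ⟨hw, _⟩ => ?_))
  · funext i
    simp [hz]
  · have hmin : Finset.univ.inf' hne (fun i => w i - w k) = -w k := by
      refine le_antisymm ?_ (Finset.le_inf' _ _ fun i _ => by linarith [(hw i).1])
      exact (Finset.inf'_le _ (Finset.mem_univ j)).trans_eq (by simp only [hj, zero_sub])
    funext i
    simp [hmin]
  · obtain ⟨j, -, hj⟩ := Finset.exists_mem_eq_inf' hne z
    refine ⟨fun i => ⟨?_, ?_⟩, j, ?_⟩ <;> simp only [hj]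
    · linarith [Finset.inf'_le z (Finset.mem_univ i), hj]
    · linarith [hz i j]
    · ring
  · exact ⟨sub_self _, fun i j => by linarith [(hw i).2, (hw j).1]⟩

theorem ncard_boundedDiff_eq_ncard_spread_le (d t : ℕ) :
    {x : Fin d → ℤ | (∀ i j, x i - x j ≤ t) ∧ ∀ i, -(t : ℤ) ≤ x i ∧ x i ≤ t}.ncard =
      {z : Fin (d + 1) → ℤ | z 0 = 0 ∧ ∀ i j, z i - z j ≤ t}.ncard := by
  rw [← Set.ncard_image_of_injective _ (Fin.cons_right_injective (α := fun _ => ℤ) 0)]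
  congr 1
  ext z
  constructor
  · rintro ⟨x, ⟨hdiff, hbound⟩, rfl⟩
    refine ⟨rfl, Fin.forall_fin_succ.2 ⟨Fin.forall_fin_succ.2 ⟨?_, ?_⟩,
      fun i => Fin.forall_fin_succ.2 ⟨?_, ?_⟩⟩⟩ <;> simp
    · intro j; linarith [hbound j]
    · linarith [hbound i]
    · intro j; linarith [hdiff i j]
  · rintro ⟨hz, hdiff⟩
    refine ⟨Fin.tail z, ⟨fun i j => hdiff _ _, fun i => ⟨?_, ?_⟩⟩, ?_⟩
    · linarith [hdiff 0 i.succ, show Fin.tail z i = z i.succ from rfl]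
    · linarith [hdiff i.succ 0, show Fin.tail z i = z i.succ from rfl]
    · rw [← hz]; exact Fin.cons_self_tail z

end Counting

theorem stmt1_general (d t : ℕ) :
    Set.ncard {x : Fin d → ℤ |
        (fun i => (x i : ℝ)) ∈ (t : ℝ) • (convexHull ℝ
          ({x : Fin d → ℝ | ∀ i, 0 ≤ x i ∧ x i ≤ 1} ∪
            (-{x : Fin d → ℝ | ∀ i, 0 ≤ x i ∧ x i ≤ 1})) : Set (Fin d → ℝ))} =
      (t + 1) ^ (d + 1) - t ^ (d + 1) := by
  have hdilate := smul_convexHull_unitCube_union_neg (ι := Fin d) (Nat.cast_nonneg (α := ℝ) t)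
  calc _ = {x : Fin d → ℤ | (∀ i j, x i - x j ≤ t) ∧ ∀ i, -(t : ℤ) ≤ x i ∧ x i ≤ t}.ncard := by
        congr 1
        ext x
        exact (Set.ext_iff.1 hdilate _).trans intCast_mem_boundedDiffBox
    _ = {w : Fin (d + 1) → ℤ | (∀ i, 0 ≤ w i ∧ w i ≤ t) ∧ ∃ j, w j = 0}.ncard := by
        rw [ncard_boundedDiff_eq_ncard_spread_le,
          ncard_spread_le_eq_ncard_Icc_and_exists_eq_zero]
    _ = (t + 1) ^ (d + 1) - t ^ (d + 1) := by
        rw [ncard_Icc_and_exists_eq_zero, Fintype.card_fin]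

/-- the Ehrhart counting function of
`Q = conv([0,1]^d ∪ -[0,1]^d)` equals `(t+1)^{d+1} - t^{d+1}`. -/
theorem stmt1 (d t : ℕ) (ht : 0 < t) :
    Set.ncard {x : Fin d → ℤ |
        (fun i => (x i : ℝ)) ∈ (t : ℝ) • (convexHull ℝ
          ({x : Fin d → ℝ | ∀ i, 0 ≤ x i ∧ x i ≤ 1} ∪
            (-{x : Fin d → ℝ | ∀ i, 0 ≤ x i ∧ x i ≤ 1})) : Set (Fin d → ℝ))} =
      (t + 1) ^ (d + 1) - t ^ (d + 1) :=
  stmt1_general d t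
end

section
/- Let P be a finite poset on [d]. The polytope Q^(sym)_{A_P} is normal (has the integer decomposition property): for each integer N > 0 and each lattice point a ∈ N·Q^(sym)_{A_P} ∩ Z^d, there exist lattice points a_1, ..., a_N ∈ Q^(sym)_{A_P} ∩ Z^d with a = a_1 + ... + a_N. -/
open Pointwise

/-!
Write `alt_l x = x c₁ - x c₂ + x c₃ - ⋯` for a chain `l = c₁ ≤ c₂ ≤ ⋯`. For a lower set `I`
the indicator `ρ(I)` is antitone with values in `{0, 1}`, so `alt_l ρ(I) ∈ [0, 1]`; hence the
functional `alt_{l₁} - alt_{l₂}` is at most `1` on `±ρ(I)`, and at most `N` on `N • Q`.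
For a lattice point `a` of `N • Q`, let `u i` (resp. `v i`) be the supremum of `alt_l a`
(resp. `alt_l (-a)`) over chains `l` above `i`. Prepending `i` to a chain shows `a = u - v`; `u`
and `v` are nonnegative, antitone and satisfy `u p + v q ≤ N`. Slicing `u` and `v` into their
superlevel sets then writes `a` as the sum of `N` points `ρ{u > j} - ρ{v > N - 1 - j}`, each of
which is `ρ(I)`, `-ρ(I)` or `0`.
-/

theorem LinearMap.le_mul_of_mem_smul_convexHull {E : Type*} [AddCommGroup E] [Module ℝ E]
    (φ : E →ₗ[ℝ] ℝ) {S : Set E} {c t : ℝ} (hφ : ∀ s ∈ S, φ s ≤ c) (ht : 0 ≤ t) {x : E}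
    (hx : x ∈ t • convexHull ℝ S) : φ x ≤ t * c := by
  obtain ⟨y, hy, rfl⟩ := hx
  have hy' : φ y ≤ c := convexHull_min hφ (convex_halfSpace_le φ.isLinear c) hy
  rw [map_smul, smul_eq_mul]
  exact mul_le_mul_of_nonneg_left hy' ht

theorem zero_mem_convexHull_of_neg_mem {E : Type*} [AddCommGroup E] [Module ℝ E] {S : Set E}
    {x : E} (hx : x ∈ S) (hnx : -x ∈ S) : (0 : E) ∈ convexHull ℝ S := by
  have := convex_convexHull ℝ S (subset_convexHull ℝ S hx) (subset_convexHull ℝ S hnx)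
    (by norm_num : (0 : ℝ) ≤ 1 / 2) (by norm_num : (0 : ℝ) ≤ 1 / 2) (by norm_num)
  simpa using this

lemma IsLowerSet.antitone_indicator_one {α R : Type*} [Preorder α] [Zero R] [One R] [Preorder R]
    [ZeroLEOneClass R] {I : Set α} (hI : IsLowerSet I) : Antitone (I.indicator (1 : α → R)) := by
  intro x y hxy
  by_cases hy : y ∈ I
  · rw [Set.indicator_of_mem hy, Set.indicator_of_mem (hI hxy hy)]
    exact le_rfl
  · rw [Set.indicator_of_notMem hy]
    exact Set.indicator_nonneg (fun _ _ => zero_le_one) x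

section AlternatingSum

variable {α : Type*} (R : Type*) [CommRing R]

def alternatingSumAlong (l : List α) : (α → R) →ₗ[R] R :=
  (l.map fun c => LinearMap.proj c).alternatingSum

@[simp]
lemma alternatingSumAlong_nil (g : α → R) : alternatingSumAlong R [] g = 0 := rfl

@[simp]
lemma alternatingSumAlong_cons (c : α) (l : List α) (g : α → R) :
    alternatingSumAlong R (c :: l) g = g c - alternatingSumAlong R l g := by
  simp [alternatingSumAlong, List.alternatingSum_cons]

lemma alternatingSumAlong_intCast (l : List α) (g : α → ℤ) :
    alternatingSumAlong ℝ l (fun i => (g i : ℝ)) = alternatingSumAlong ℤ l g := by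
  induction l <;> simp [*]

variable {R} [PartialOrder α] [PartialOrder R] [IsOrderedAddMonoid R]

lemma alternatingSumAlong_mem_Icc {g : α → R} (hg : Antitone g) (hg0 : 0 ≤ g) {l : List α}
    (hl : l.Pairwise (· ≤ ·)) {c : α} (hc : ∀ x ∈ l, c ≤ x) :
    alternatingSumAlong R l g ∈ Set.Icc 0 (g c) := by
  induction l generalizing c with
  | nil => exact ⟨le_rfl, hg0 c⟩
  | cons d l ih =>
    obtain ⟨hdl, hl⟩ := List.pairwise_cons.mp hl
    obtain ⟨h0, hd⟩ := ih hl hdl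
    rw [alternatingSumAlong_cons]
    exact ⟨sub_nonneg.mpr hd, (sub_le_self _ h0).trans (hg (hc d List.mem_cons_self))⟩

variable [ZeroLEOneClass R]

lemma alternatingSumAlong_indicator_mem_Icc {I : Set α} (hI : IsLowerSet I) {l : List α}
    (hl : l.Pairwise (· ≤ ·)) : alternatingSumAlong R l (I.indicator 1) ∈ Set.Icc 0 1 := by
  cases l with
  | nil => simp
  | cons c l =>
    have hc : ∀ x ∈ c :: l, c ≤ x := by
      simpa using (List.pairwise_cons.mp hl).1
    obtain ⟨h0, h1⟩ := alternatingSumAlong_mem_Icc hI.antitone_indicator_one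
      (Set.indicator_nonneg fun _ _ => zero_le_one (α := R)) hl hc
    exact ⟨h0, h1.trans (Set.indicator_apply_le' (fun _ => le_rfl) fun _ => zero_le_one (α := R))⟩

end AlternatingSum

/-- The vertices `±ρ(I)` of `Q^(sym)_{A_P}`, for nonempty lower sets (poset ideals) `I`. -/
def signedLowerSetIndicators (α : Type*) [PartialOrder α] : Set (α → ℝ) :=
  {v | ∃ I : Set α, IsLowerSet I ∧ I.Nonempty ∧ (v = I.indicator 1 ∨ v = -I.indicator 1)}

lemma alternatingSumAlong_sub_le_of_mem_smul_convexHull {α : Type*} [PartialOrder α]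
    {x : α → ℝ} {t : ℝ} (ht : 0 ≤ t) (hx : x ∈ t • convexHull ℝ (signedLowerSetIndicators α))
    {l₁ l₂ : List α} (h₁ : l₁.Pairwise (· ≤ ·)) (h₂ : l₂.Pairwise (· ≤ ·)) :
    alternatingSumAlong ℝ l₁ x - alternatingSumAlong ℝ l₂ x ≤ t := by
  have hvertex : ∀ s ∈ signedLowerSetIndicators α,
      (alternatingSumAlong ℝ l₁ - alternatingSumAlong ℝ l₂) s ≤ 1 := by
    rintro _ ⟨I, hI, -, rfl | rfl⟩
    all_goals
      obtain ⟨h₁0, h₁1⟩ := alternatingSumAlong_indicator_mem_Icc (R := ℝ) hI h₁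
      obtain ⟨h₂0, h₂1⟩ := alternatingSumAlong_indicator_mem_Icc (R := ℝ) hI h₂
      simp only [LinearMap.sub_apply, map_neg]
      linarith
  simpa using (alternatingSumAlong ℝ l₁ - alternatingSumAlong ℝ l₂).le_mul_of_mem_smul_convexHull
    hvertex ht hx

lemma intCast_mem_convexHull_signedLowerSetIndicators {α : Type*} [PartialOrder α] [Nonempty α]
    {f : α → ℤ} {I : Set α} (hI : IsLowerSet I) (hf : f = I.indicator 1 ∨ f = -I.indicator 1) :
    (fun i => (f i : ℝ)) ∈ convexHull ℝ (signedLowerSetIndicators α) := by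
  have hcast : (fun i => (f i : ℝ)) = I.indicator 1 ∨ (fun i => (f i : ℝ)) = -I.indicator 1 := by
    rcases hf with rfl | rfl <;> [left; right] <;> ext i <;> by_cases hi : i ∈ I <;> simp [hi]
  rcases I.eq_empty_or_nonempty with rfl | hne
  · rw [Set.indicator_empty', neg_zero, or_self] at hcast
    rw [hcast]
    exact zero_mem_convexHull_of_neg_mem (x := Set.univ.indicator 1)
      ⟨Set.univ, isLowerSet_univ, Set.univ_nonempty, Or.inl rfl⟩
      ⟨Set.univ, isLowerSet_univ, Set.univ_nonempty, Or.inr rfl⟩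
  · exact subset_convexHull ℝ _ ⟨I, hI, hne, hcast⟩

section ChainEnvelope

variable {α : Type*} [PartialOrder α]

def chainsAbove (i : α) : Set (List α) := {l | l.Pairwise (· ≤ ·) ∧ ∀ x ∈ l, i ≤ x}

lemma nil_mem_chainsAbove (i : α) : [] ∈ chainsAbove i := by
  simp [chainsAbove]

lemma cons_mem_chainsAbove {i : α} {l : List α} (hl : l ∈ chainsAbove i) :
    i :: l ∈ chainsAbove i :=
  ⟨List.pairwise_cons.mpr ⟨hl.2, hl.1⟩, by simpa using hl.2⟩

lemma chainsAbove_anti {i j : α} (hij : i ≤ j) : chainsAbove j ⊆ chainsAbove i :=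
  fun _ hl => ⟨hl.1, fun x hx => hij.trans (hl.2 x hx)⟩

noncomputable def chainEnvelope (g : α → ℤ) (i : α) : ℤ :=
  sSup ((fun l => alternatingSumAlong ℤ l g) '' chainsAbove i)

variable {g : α → ℤ} {B : ℤ}

lemma le_chainEnvelope (hB : ∀ l : List α, l.Pairwise (· ≤ ·) → alternatingSumAlong ℤ l g ≤ B)
    {i : α} {l : List α} (hl : l ∈ chainsAbove i) :
    alternatingSumAlong ℤ l g ≤ chainEnvelope g i :=
  le_csSup ⟨B, by rintro _ ⟨l, hl, rfl⟩; exact hB l hl.1⟩ ⟨l, hl, rfl⟩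

lemma chainEnvelope_le {i : α} {b : ℤ}
    (h : ∀ l ∈ chainsAbove i, alternatingSumAlong ℤ l g ≤ b) : chainEnvelope g i ≤ b :=
  csSup_le ⟨0, [], nil_mem_chainsAbove i, rfl⟩ (by rintro _ ⟨l, hl, rfl⟩; exact h l hl)

lemma chainEnvelope_nonneg
    (hB : ∀ l : List α, l.Pairwise (· ≤ ·) → alternatingSumAlong ℤ l g ≤ B) :
    0 ≤ chainEnvelope g :=
  fun i => le_chainEnvelope hB (nil_mem_chainsAbove i)

lemma chainEnvelope_antitone
    (hB : ∀ l : List α, l.Pairwise (· ≤ ·) → alternatingSumAlong ℤ l g ≤ B) :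
    Antitone (chainEnvelope g) :=
  fun _ _ hij => chainEnvelope_le fun _ hl => le_chainEnvelope hB (chainsAbove_anti hij hl)

lemma chainEnvelope_neg_add_le
    (hB : ∀ l : List α, l.Pairwise (· ≤ ·) → alternatingSumAlong ℤ l g ≤ B) (i : α) :
    chainEnvelope (-g) i + g i ≤ chainEnvelope g i := by
  suffices chainEnvelope (-g) i ≤ chainEnvelope g i - g i by omega
  refine chainEnvelope_le fun l hl => ?_
  have := le_chainEnvelope hB (cons_mem_chainsAbove hl)
  rw [alternatingSumAlong_cons] at this
  rw [map_neg]
  omega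

lemma chainEnvelope_add_le {h : α → ℤ} {N : ℤ}
    (hgh : ∀ l₁ l₂ : List α, l₁.Pairwise (· ≤ ·) → l₂.Pairwise (· ≤ ·) →
      alternatingSumAlong ℤ l₁ g + alternatingSumAlong ℤ l₂ h ≤ N) (p q : α) :
    chainEnvelope g p + chainEnvelope h q ≤ N := by
  suffices chainEnvelope g p ≤ N - chainEnvelope h q by omega
  refine chainEnvelope_le fun l₁ hl₁ => ?_
  suffices chainEnvelope h q ≤ N - alternatingSumAlong ℤ l₁ g by omega
  exact chainEnvelope_le fun l₂ hl₂ => by linarith [hgh l₁ l₂ hl₁.1 hl₂.1]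

lemma chainEnvelope_sub_chainEnvelope_neg
    (hB : ∀ l : List α, l.Pairwise (· ≤ ·) → alternatingSumAlong ℤ l g ≤ B)
    (hB' : ∀ l : List α, l.Pairwise (· ≤ ·) → alternatingSumAlong ℤ l (-g) ≤ B) :
    chainEnvelope g - chainEnvelope (-g) = g := by
  ext i
  have h₁ := chainEnvelope_neg_add_le hB i
  have h₂ := chainEnvelope_neg_add_le hB' i
  rw [neg_neg] at h₂
  simp only [Pi.sub_apply, Pi.neg_apply] at h₂ ⊢
  omega

end ChainEnvelope

lemma Fin.sum_ite_lt_intCast {N : ℕ} {c : ℤ} (h0 : 0 ≤ c) (hc : c ≤ N) :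
    ∑ j : Fin N, (if (j : ℤ) < c then (1 : ℤ) else 0) = c := by
  lift c to ℕ using h0
  rw [Finset.sum_boole]
  simp only [Nat.cast_lt, Fin.card_filter_val_lt]
  rw [min_eq_right (by exact_mod_cast hc)]

lemma exists_lowerSet_layers {α : Type*} [Preorder α] {u v : α → ℤ} {N : ℕ}
    (hu : Antitone u) (hv : Antitone v) (hu0 : 0 ≤ u) (hv0 : 0 ≤ v)
    (huv : ∀ p q, u p + v q ≤ N) :
    ∃ f : Fin N → α → ℤ,
      (∀ j, ∃ I : Set α, IsLowerSet I ∧ (f j = I.indicator 1 ∨ f j = -I.indicator 1)) ∧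
      ∑ j, f j = u - v := by
  classical
  let U : Fin N → Set α := fun j => {i | (j : ℤ) < u i}
  let V : Fin N → Set α := fun j => {i | (j : ℤ) < v i}
  -- the `j`-th layer of `u` is paired with the `(N - 1 - j)`-th layer of `v`, so they never meet
  refine ⟨fun j => (U j).indicator 1 - (V j.rev).indicator 1, fun j => ?_, ?_⟩
  · by_cases hV : V j.rev = ∅
    · refine ⟨U j, fun _ _ hxy hy => hy.trans_le (hu hxy), Or.inl ?_⟩
      simp only [hV, Set.indicator_empty', sub_zero]
    · obtain ⟨q, hq⟩ := Set.nonempty_iff_ne_empty.mpr hV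
      have hU : U j = ∅ := by
        refine Set.eq_empty_of_forall_notMem fun p hp => ?_
        have := huv p q
        simp only [U, V, Set.mem_ofPred_eq, Fin.val_rev] at hp hq
        omega
      refine ⟨V j.rev, fun _ _ hxy hy => hy.trans_le (hv hxy), Or.inr ?_⟩
      simp only [hU, Set.indicator_empty', zero_sub]
  · ext i
    have hui : u i ≤ N := le_of_add_le_of_nonneg_left (huv i i) (hv0 i)
    have hvi : v i ≤ N := le_of_add_le_of_nonneg_right (huv i i) (hu0 i)
    simp only [Finset.sum_apply, Pi.sub_apply, Finset.sum_sub_distrib, Set.indicator_apply,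
      Set.mem_ofPred_eq, Pi.one_apply, U, V]
    have hrev := Equiv.sum_comp Fin.revPerm fun j : Fin N => if (j : ℤ) < v i then (1 : ℤ) else 0
    simp only [Fin.revPerm_apply] at hrev
    rw [hrev, Fin.sum_ite_lt_intCast (hu0 i) hui, Fin.sum_ite_lt_intCast (hv0 i) hvi]

theorem stmt10_general (α : Type*) [PartialOrder α] (N : ℕ)
    (a : α → ℤ)
    (ha : (fun i => (a i : ℝ)) ∈ (N : ℝ) • (convexHull ℝ
      {v : α → ℝ | ∃ I : Set α, IsLowerSet I ∧ I.Nonempty ∧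
        (v = Set.indicator I 1 ∨ v = -Set.indicator I 1)} : Set (α → ℝ))) :
    ∃ f : Fin N → (α → ℤ),
      (∀ j, (fun i => ((f j i : ℝ))) ∈ convexHull ℝ
        {v : α → ℝ | ∃ I : Set α, IsLowerSet I ∧ I.Nonempty ∧
          (v = Set.indicator I 1 ∨ v = -Set.indicator I 1)}) ∧
      a = ∑ j, f j := by
  change _ ∈ (N : ℝ) • convexHull ℝ (signedLowerSetIndicators α) at ha
  have : Nonempty α := by
    obtain ⟨x, hx, -⟩ := ha
    obtain ⟨-, I, -, ⟨i, -⟩, -⟩ := convexHull_nonempty_iff.mp ⟨x, hx⟩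
    exact ⟨i⟩
  have hchain : ∀ l₁ l₂ : List α, l₁.Pairwise (· ≤ ·) → l₂.Pairwise (· ≤ ·) →
      alternatingSumAlong ℤ l₁ a + alternatingSumAlong ℤ l₂ (-a) ≤ N := fun l₁ l₂ h₁ h₂ => by
    have := alternatingSumAlong_sub_le_of_mem_smul_convexHull N.cast_nonneg ha h₁ h₂
    rw [alternatingSumAlong_intCast, alternatingSumAlong_intCast] at this
    rw [map_neg, ← sub_eq_add_neg]
    exact_mod_cast this
  have hB : ∀ l : List α, l.Pairwise (· ≤ ·) → alternatingSumAlong ℤ l a ≤ N :=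
    fun l hl => by simpa using hchain l [] hl .nil
  have hB' : ∀ l : List α, l.Pairwise (· ≤ ·) → alternatingSumAlong ℤ l (-a) ≤ N :=
    fun l hl => by simpa using hchain [] l .nil hl
  obtain ⟨f, hf, hsum⟩ := exists_lowerSet_layers (chainEnvelope_antitone hB)
    (chainEnvelope_antitone hB') (chainEnvelope_nonneg hB) (chainEnvelope_nonneg hB')
    (chainEnvelope_add_le hchain)
  refine ⟨f, fun j => ?_, by rw [hsum, chainEnvelope_sub_chainEnvelope_neg hB hB']⟩
  obtain ⟨I, hI, hfI⟩ := hf j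
  exact intCast_mem_convexHull_signedLowerSetIndicators hI hfI

/-- the polytope `Q^(sym)_{A_P}` is normal (integer decomposition
property): every lattice point of the `N`-th dilate is a sum of `N` lattice points of
the polytope. -/
theorem stmt10 (α : Type*) [Fintype α] [PartialOrder α] (N : ℕ) (hN : 0 < N)
    (a : α → ℤ)
    (ha : (fun i => (a i : ℝ)) ∈ (N : ℝ) • (convexHull ℝ
      {v : α → ℝ | ∃ I : Set α, IsLowerSet I ∧ I.Nonempty ∧
        (v = Set.indicator I 1 ∨ v = -Set.indicator I 1)} : Set (α → ℝ))) :
    ∃ f : Fin N → (α → ℤ),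
      (∀ j, (fun i => ((f j i : ℝ))) ∈ convexHull ℝ
        {v : α → ℝ | ∃ I : Set α, IsLowerSet I ∧ I.Nonempty ∧
          (v = Set.indicator I 1 ∨ v = -Set.indicator I 1)}) ∧
      a = ∑ j, f j :=
  stmt10_general α N a ha
end

section
/- Let P be a finite poset in which some three elements a, b, c are pairwise incomparable. Then the matrix A_P (columns the indicator vectors of nonempty poset ideals of P) is not unimodular, i.e., not all nonzero maximal minors of A_P are ±1. -/
/-!
Let `I = ↓a ∪ ↓b ∪ ↓c`. Take as columns the principal ideals `↓y` for `y ∉ {a, b, c}`, and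
`I \ {c}`, `I \ {a}`, `I \ {b}` for `a`, `b`, `c`. Sorting the elements into the three layers
`I \ {a, b, c}`, `{a, b, c}` and `P \ I` makes this matrix block upper triangular. The two outer
blocks are unitriangular with respect to the order of `P`, and the middle block is
`!![1, 0, 1; 1, 1, 0; 0, 1, 1]`, so the determinant is `2`.
-/

open Matrix

theorem Matrix.det_eq_prod_diag_of_not_le {β R : Type*} [Fintype β] [DecidableEq β]
    [PartialOrder β] [CommRing R] (M : Matrix β β R) (hM : ∀ i j, ¬ i ≤ j → M i j = 0) :
    M.det = ∏ i, M i i := by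
  let _ : Fintype (LinearExtension β) := ‹Fintype β›
  let _ : DecidableEq (LinearExtension β) := ‹DecidableEq β›
  exact det_of_isUpperTriangular (m := LinearExtension β) (M := M)
    fun i j hji => hM i j fun hij => (toLinearExtension.monotone hij).not_gt hji

theorem LowerSet.mem_erase {α : Type*} [Preorder α] {s : LowerSet α} {a x : α} :
    x ∈ s.erase a ↔ x ∈ s ∧ ¬ a ≤ x :=
  Iff.rfl

theorem isAntichain_triple {α : Type*} [PartialOrder α] {a b c : α}
    (hab : IncompRel (· ≤ ·) a b) (hac : IncompRel (· ≤ ·) a c) (hbc : IncompRel (· ≤ ·) b c) :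
    IsAntichain (· ≤ ·) ({a, b, c} : Set α) := by
  simp only [IsAntichain, Set.pairwise_insert, Set.pairwise_singleton, Set.mem_insert_iff,
    Set.mem_singleton_iff, true_and]
  unfold IncompRel at *
  aesop

namespace PosetIdeal

variable {α : Type*} [PartialOrder α]

noncomputable def indicatorMatrix {ι : Type*} (I : ι → Set α) : Matrix α ι ℤ :=
  of fun x y => (I y).indicator 1 x

variable [DecidableEq α] (a b c : α)

/-- `s.erase a` is `s \ Ici a`; for an antichain `{a, b, c}` it removes a single element. -/
def column (y : α) : LowerSet α :=
  if y = a then (lowerClosure {a, b, c}).erase c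
  else if y = b then (lowerClosure {a, b, c}).erase a
  else if y = c then (lowerClosure {a, b, c}).erase b
  else LowerSet.Iic y

open Classical in
noncomputable def layer (x : α) : Fin 3 :=
  if x ∈ ({a, b, c} : Set α) then 1 else if x ∈ lowerClosure {a, b, c} then 0 else 2

variable {a b c}

theorem mem_column_self (hca : ¬ c ≤ a) (hab : ¬ a ≤ b) (hbc : ¬ b ≤ c) (y : α) :
    y ∈ column a b c y := by
  unfold column
  split_ifs <;> simp_all [LowerSet.mem_erase]

theorem column_subset_lowerClosure {y : α} (hy : y ∈ ({a, b, c} : Set α)) :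
    (column a b c y : Set α) ⊆ lowerClosure {a, b, c} := by
  unfold column
  split_ifs <;> first | exact Set.sdiff_subset | simp_all

theorem column_eq_Iic {y : α} (hy : y ∉ ({a, b, c} : Set α)) :
    column a b c y = LowerSet.Iic y := by
  simp only [Set.mem_insert_iff, Set.mem_singleton_iff, not_or] at hy
  simp [column, hy.1, hy.2.1, hy.2.2]

theorem layer_eq_one_iff {x : α} : layer a b c x = 1 ↔ x ∈ ({a, b, c} : Set α) := by
  unfold layer
  split_ifs <;> simp_all

theorem layer_le_of_mem_column (hS : IsAntichain (· ≤ ·) ({a, b, c} : Set α)) {x y : α}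
    (hx : x ∈ column a b c y) : layer a b c x ≤ layer a b c y := by
  by_cases hy : y ∈ ({a, b, c} : Set α)
  · have : x ∈ lowerClosure {a, b, c} := column_subset_lowerClosure hy hx
    unfold layer; split_ifs <;> simp_all
  rw [column_eq_Iic hy, LowerSet.mem_Iic_iff] at hx
  by_cases hyI : y ∈ lowerClosure {a, b, c}
  · have hxI : x ∈ lowerClosure {a, b, c} := (lowerClosure _).lower hx hyI
    -- `x ≤ y ≤ s` with `x, s` in the antichain squeezes `y` to `s`
    have hxS : x ∉ ({a, b, c} : Set α) := by
      intro hxS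
      obtain ⟨s, hs, hys⟩ := mem_lowerClosure.1 hyI
      obtain rfl := hS.eq hxS hs (hx.trans hys)
      exact hy (le_antisymm hys hx ▸ hs)
    simp [layer, hy, hyI, hxS, hxI]
  · simp only [layer, hy, hyI, if_false]
    exact Fin.le_last _

theorem blockTriangular_layer (hS : IsAntichain (· ≤ ·) ({a, b, c} : Set α)) :
    (indicatorMatrix fun y => (column a b c y : Set α)).BlockTriangular (layer a b c) :=
  fun _ _ hji => Set.indicator_of_notMem (fun hi => (layer_le_of_mem_column hS hi).not_gt hji) _

variable (a b c) in
noncomputable def layerOneEquiv (hab : IncompRel (· ≤ ·) a b) (hac : IncompRel (· ≤ ·) a c)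
    (hbc : IncompRel (· ≤ ·) b c) : Fin 3 ≃ {x // layer a b c x = 1} :=
  Equiv.ofBijective ![⟨a, layer_eq_one_iff.2 (by simp)⟩, ⟨b, layer_eq_one_iff.2 (by simp)⟩,
      ⟨c, layer_eq_one_iff.2 (by simp)⟩] <| by
    refine ⟨fun i j hij => ?_, fun ⟨x, hx⟩ => ?_⟩
    · fin_cases i <;> fin_cases j <;>
        simp_all [Subtype.ext_iff, hab.ne, hac.ne, hbc.ne, hab.ne.symm, hac.ne.symm, hbc.ne.symm]
    · rcases layer_eq_one_iff.1 hx with rfl | rfl | rfl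
      exacts [⟨0, rfl⟩, ⟨1, rfl⟩, ⟨2, rfl⟩]

theorem coe_layerOneEquiv (hab : IncompRel (· ≤ ·) a b) (hac : IncompRel (· ≤ ·) a c)
    (hbc : IncompRel (· ≤ ·) b c) (i : Fin 3) :
    (layerOneEquiv a b c hab hac hbc i : α) = ![a, b, c] i := by
  fin_cases i <;> rfl

theorem toSquareBlock_layer_one_reindex (hab : IncompRel (· ≤ ·) a b)
    (hac : IncompRel (· ≤ ·) a c) (hbc : IncompRel (· ≤ ·) b c) :
    ((indicatorMatrix fun y => (column a b c y : Set α)).toSquareBlock (layer a b c) 1).submatrix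
      (layerOneEquiv a b c hab hac hbc) (layerOneEquiv a b c hab hac hbc) =
      !![1, 0, 1; 1, 1, 0; 0, 1, 1] := by
  ext i j
  fin_cases i <;> fin_cases j <;>
    simp [coe_layerOneEquiv, indicatorMatrix, toSquareBlock_def, column, hab.ne.symm, hac.ne.symm,
      hbc.ne.symm, hab.1, hab.2, hac.1, hac.2, hbc.1, hbc.2]

variable [Fintype α]

theorem det_toSquareBlock_layer_of_ne_one {k : Fin 3} (hk : k ≠ 1) :
    ((indicatorMatrix fun y => (column a b c y : Set α)).toSquareBlock (layer a b c) k).det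
      = 1 := by
  have hcol (j : {x // layer a b c x = k}) : column a b c j = LowerSet.Iic (j : α) :=
    column_eq_Iic fun hj => hk (j.2 ▸ layer_eq_one_iff.2 hj)
  rw [det_eq_prod_diag_of_not_le]
  · exact Finset.prod_eq_one fun i _ => by simp [indicatorMatrix, toSquareBlock_def, hcol]
  · intro i j hij
    simp [indicatorMatrix, toSquareBlock_def, hcol, Subtype.coe_le_coe.not.2 hij]

theorem det_toSquareBlock_layer_one (hab : IncompRel (· ≤ ·) a b) (hac : IncompRel (· ≤ ·) a c)
    (hbc : IncompRel (· ≤ ·) b c) :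
    ((indicatorMatrix fun y => (column a b c y : Set α)).toSquareBlock (layer a b c) 1).det
      = 2 := by
  rw [← det_submatrix_equiv_self (layerOneEquiv a b c hab hac hbc),
    toSquareBlock_layer_one_reindex, det_fin_three]
  decide

theorem det_indicatorMatrix_column (hab : IncompRel (· ≤ ·) a b) (hac : IncompRel (· ≤ ·) a c)
    (hbc : IncompRel (· ≤ ·) b c) :
    (indicatorMatrix fun y => (column a b c y : Set α)).det = 2 := by
  rw [(blockTriangular_layer (isAntichain_triple hab hac hbc)).det_fintype, Fin.prod_univ_three,
    det_toSquareBlock_layer_of_ne_one (by decide), det_toSquareBlock_layer_one hab hac hbc,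
    det_toSquareBlock_layer_of_ne_one (by decide)]
  norm_num

end PosetIdeal

open PosetIdeal in
/-- if a finite poset contains three pairwise incomparable elements, then
the matrix `A_P` of indicator vectors of nonempty poset ideals is not unimodular: some
maximal minor is neither 0 nor ±1. -/
theorem stmt12 (α : Type*) [Fintype α] [DecidableEq α] [PartialOrder α] (a b c : α)
    (hab : ¬ a ≤ b ∧ ¬ b ≤ a) (hac : ¬ a ≤ c ∧ ¬ c ≤ a) (hbc : ¬ b ≤ c ∧ ¬ c ≤ b) :
    ∃ cols : α → {I : Set α // IsLowerSet I ∧ I.Nonempty},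
      (Matrix.of fun x y => Set.indicator (cols y).1 (1 : α → ℤ) x).det ≠ 0 ∧
      (Matrix.of fun x y => Set.indicator (cols y).1 (1 : α → ℤ) x).det ≠ 1 ∧
      (Matrix.of fun x y => Set.indicator (cols y).1 (1 : α → ℤ) x).det ≠ -1 := by
  refine ⟨fun y => ⟨column a b c y, (column a b c y).lower, y,
    mem_column_self hac.2 hab.1 hbc.1 y⟩, ?_⟩
  have hdet := det_indicatorMatrix_column (α := α) hab hac hbc
  simp only [indicatorMatrix] at hdet
  simp [hdet]
end
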